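/- arXiv:1410.2372 — 4 statements merged into one kernel-verified Lean document; each statement's English description precedes it below -/
import Mathlib

section
/- Let φ be a continuous semiflow on a compact metric space X and τ an admissible function on X. Then the τ-topological entropy of φ equals the classical topological entropy of φ: h^τ_top(φ) = h_top(φ). -/
open Set Filter Metric ENNReal

/-- A semiflow: `φ 0 = id` and `φ (t+s) = φ t ∘ φ s` for nonnegative times. -/
def IsSemiflow {X : Type*} (φ : ℝ → X → X) : Prop :=
  (∀ x, φ 0 x = x) ∧ ∀ s t : ℝ, 0 ≤ s → 0 ≤ t → ∀ x, φ (t + s) x = φ t (φ s x)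

/-- A continuous semiflow: jointly continuous on `[0,∞) × X`. -/
def IsContSemiflow {X : Type*} [MetricSpace X] (φ : ℝ → X → X) : Prop :=
  IsSemiflow φ ∧ ContinuousOn (fun p : ℝ × X => φ p.1 p.2) (Set.Ici (0:ℝ) ×ˢ Set.univ)

/-- `τ` is an admissible function for the semiflow `ψ`, with respect to `Z`, with constant `η`:
it assigns to each point a strictly increasing sequence of positive times, with `τ₁ ≥ η` on `Z`,
gaps at least `η`, and compatible with the time translation by the semiflow. -/
def IsAdmissible {X : Type*} (ψ : ℝ → X → X) (τ : X → ℕ → ℝ) (Z : Set X) (η : ℝ) : Prop :=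
  0 < η ∧ (∀ x, StrictMono (τ x)) ∧ (∀ x n, 0 < τ x n) ∧
  (∀ x ∈ Z, η ≤ τ x 0) ∧
  (∀ x n s, 0 ≤ s → s < τ x 0 → τ (ψ s x) n = τ x n - s) ∧
  (∀ x n, η ≤ τ x (n + 1) - τ x n)

/-- The set `J^τ_{T,δ}(x) = (0,T] ∖ ⋃_{j : τ_j(x) ≤ T} (τ_j(x)-δ, τ_j(x)+δ)`. -/
def Jset {X : Type*} (τ : X → ℕ → ℝ) (T δ : ℝ) (x : X) : Set ℝ :=
  Ioc 0 T \ ⋃ j ∈ {j | τ x j ≤ T}, Ioo (τ x j - δ) (τ x j + δ)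

/-- The `τ`-dynamical ball `B^τ(x, ψ, T, ε, δ)`. -/
def tBall {X : Type*} [MetricSpace X] (ψ : ℝ → X → X) (τ : X → ℕ → ℝ)
    (x : X) (T ε δ : ℝ) : Set X :=
  {y | ∀ t ∈ Jset τ T δ x, dist (ψ t x) (ψ t y) < ε}

/-- The classical dynamical ball `B(x, ψ, T, ε)`. -/
def dynBall {X : Type*} [MetricSpace X] (ψ : ℝ → X → X) (x : X) (T ε : ℝ) : Set X :=
  {y | ∀ t ∈ Icc 0 T, dist (ψ t x) (ψ t y) < ε}

/-- `E` is `(ψ, T, ε)`-separated. -/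
def IsSep {X : Type*} [MetricSpace X] (ψ : ℝ → X → X) (T ε : ℝ) (E : Set X) : Prop :=
  ∀ x ∈ E, ∀ y ∈ E, y ≠ x → y ∉ dynBall ψ x T ε

/-- `E` is `(ψ, τ, T, ε, δ)`-separated. -/
def IsTSep {X : Type*} [MetricSpace X] (ψ : ℝ → X → X) (τ : X → ℕ → ℝ)
    (T ε δ : ℝ) (E : Set X) : Prop :=
  ∀ x ∈ E, ∀ y ∈ E, y ≠ x → y ∉ tBall ψ τ x T ε δ

/-- Maximal cardinality of a `(ψ, T, ε)`-separated subset of `Y` (in `ℝ≥0∞`). -/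
noncomputable def sepNum {X : Type*} [MetricSpace X] (ψ : ℝ → X → X) (Y : Set X)
    (T ε : ℝ) : ℝ≥0∞ :=
  ⨆ (E : Finset X) (_ : ↑E ⊆ Y ∧ IsSep ψ T ε ↑E), (E.card : ℝ≥0∞)

/-- Supremum of cardinalities of finite `(ψ, τ, T, ε, δ)`-separated subsets of `Y`. -/
noncomputable def tSepNum {X : Type*} [MetricSpace X] (ψ : ℝ → X → X) (τ : X → ℕ → ℝ)
    (Y : Set X) (T ε δ : ℝ) : ℝ≥0∞ :=
  ⨆ (E : Finset X) (_ : ↑E ⊆ Y ∧ IsTSep ψ τ T ε δ ↑E), (E.card : ℝ≥0∞)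

/-- Exponential growth rate `limsup_{T→∞} (1/T) log f(T)`, with `log ∞ = ∞`. -/
noncomputable def growthRate (f : ℝ → ℝ≥0∞) : EReal :=
  limsup (fun T : ℝ => ENNReal.log (f T) / (T : EReal)) atTop

/-- The classical topological entropy of `ψ` on `Y`
(the limit as `ε → 0⁺` is a supremum over `ε > 0` by monotonicity). -/
noncomputable def htop {X : Type*} [MetricSpace X] (ψ : ℝ → X → X) (Y : Set X) : EReal :=
  ⨆ (ε : ℝ) (_ : 0 < ε), growthRate fun T => sepNum ψ Y T ε

/-- The `τ`-topological entropy of `ψ` on `Y`, for an admissible function with constant `η`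
(the limits as `δ → 0⁺` and `ε → 0⁺` are suprema by monotonicity). -/
noncomputable def tHtop {X : Type*} [MetricSpace X] (ψ : ℝ → X → X) (τ : X → ℕ → ℝ)
    (Y : Set X) (η : ℝ) : EReal :=
  ⨆ (δ : ℝ) (_ : 0 < δ) (_ : δ < η / 2) (ε : ℝ) (_ : 0 < ε),
    growthRate fun T => tSepNum ψ τ Y T ε δ

/-! Removing the windows `(τ_j - δ, τ_j + δ)` from the time interval loses almost nothing: a
separation time `t` inside such a window lies at most `2δ` after its left endpoint `τ_j - δ`,
which is not removed because the gaps of `τ` are at least `2δ`. By uniform continuity of the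
semiflow on `[0, 2δ] × X`, orbits that are `ε'`-close at time `τ_j - δ` are still `ε`-close at
time `t`; so a `(φ, T, ε)`-separated set is `(φ, τ, T, ε', δ)`-separated as soon as its points
are `ε'`-close, which also rules out separation times `t ≤ 2δ`. A finite cover of `X` by balls
of radius `ε'/2` then bounds `s(φ, T, ε)` by a constant times `s^τ(φ, T, ε', δ)`, and a constant
factor does not change the exponential growth rate. -/

open Topology

lemma growthRate_mono {f g : ℝ → ℝ≥0∞} (h : f ≤ g) : growthRate f ≤ growthRate g := by
  refine limsup_le_limsup ?_
  filter_upwards [eventually_ge_atTop (0 : ℝ)] with T hT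
  exact EReal.div_le_div_right_of_nonneg (by exact_mod_cast hT) (ENNReal.log_monotone (h T))

lemma growthRate_const_mul_le {c : ℝ≥0∞} (hc : c ≠ ⊤) (g : ℝ → ℝ≥0∞) :
    growthRate (fun T => c * g T) ≤ growthRate g := by
  rcases eq_or_ne c 0 with rfl | hc0
  · exact growthRate_mono fun T => by simp
  set k : ℝ := (ENNReal.log c).toReal
  have hk : ENNReal.log c = k :=
    (EReal.coe_toReal (by simpa using hc) (by simpa using hc0)).symm
  have hlim : Tendsto (fun T : ℝ => (k : EReal) / T) atTop (𝓝 0) := by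
    have hreal : Tendsto (fun T : ℝ => k / T) atTop (𝓝 0) :=
      tendsto_const_nhds.div_atTop tendsto_id
    simpa only [Function.comp_def, EReal.coe_div, EReal.coe_zero] using
      (continuous_coe_real_ereal.tendsto 0).comp hreal
  calc growthRate (fun T => c * g T)
      = limsup ((fun T : ℝ => (k : EReal) / T) + fun T => ENNReal.log (g T) / T) atTop := by
        refine limsup_congr ?_
        filter_upwards [eventually_ge_atTop (0 : ℝ)] with T hT
        rw [Pi.add_apply, ENNReal.log_mul_add, hk]
        exact EReal.add_div_of_nonneg_right (by exact_mod_cast hT)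
    _ ≤ 0 + growthRate g := by
        have hk0 : limsup (fun T : ℝ => (k : EReal) / T) atTop = 0 := hlim.limsup_eq
        rw [← hk0]
        exact EReal.limsup_add_le (.inl (by simp [hk0])) (.inl (by simp [hk0]))
    _ = growthRate g := zero_add _

lemma add_le_of_lt_of_forall_le_sub {u : ℕ → ℝ} {g : ℝ} (hg : 0 ≤ g)
    (hgap : ∀ n, g ≤ u (n + 1) - u n) {m n : ℕ} (hmn : m < n) : u m + g ≤ u n := by
  have hmono : Monotone u := monotone_nat_of_le_succ fun k => by linarith [hgap k]
  linarith [hgap m, hmono (Nat.succ_le_of_lt hmn)]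

section

variable {X : Type*}

lemma Jset_subset_Icc (τ : X → ℕ → ℝ) (T δ : ℝ) (x : X) : Jset τ T δ x ⊆ Icc 0 T :=
  fun _ ht => Ioc_subset_Icc_self ht.1

lemma exists_mem_Jset_le_le_add {τ : X → ℕ → ℝ} {x : X} {T δ t : ℝ} (hδ : 0 ≤ δ)
    (hgap : ∀ n, 2 * δ ≤ τ x (n + 1) - τ x n) (ht : t ∈ Ioc (2 * δ) T) :
    ∃ t' ∈ Jset τ T δ x, t' ≤ t ∧ t ≤ t' + 2 * δ := by
  by_cases htJ : t ∈ Jset τ T δ x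
  · exact ⟨t, htJ, le_rfl, by linarith⟩
  obtain ⟨j, hjt, hjT, htj⟩ : ∃ j, τ x j - δ < t ∧ τ x j ≤ T ∧ t < τ x j + δ := by
    simpa [Jset, ht.2, show 0 < t by linarith [ht.1]] using htJ
  refine ⟨τ x j - δ, ⟨⟨by linarith [ht.1], by linarith⟩, ?_⟩, by linarith, by linarith⟩
  simp only [mem_iUnion, mem_Ioo, not_exists, not_and]
  intro m _ hm
  rcases lt_trichotomy m j with hmj | rfl | hjm
  · linarith [add_le_of_lt_of_forall_le_sub (by linarith) hgap hmj]
  · linarith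
  · linarith [add_le_of_lt_of_forall_le_sub (by linarith) hgap hjm]

lemma IsSemiflow.apply_eq_apply_sub {φ : ℝ → X → X} (hφ : IsSemiflow φ) {s t : ℝ}
    (hs : 0 ≤ s) (hst : s ≤ t) (x : X) : φ t x = φ (t - s) (φ s x) := by
  simpa using hφ.2 s (t - s) hs (sub_nonneg.2 hst) x

lemma ContinuousOn.exists_pos_forall_Icc_dist_apply_lt [MetricSpace X] [CompactSpace X]
    {φ : ℝ → X → X} {L ε : ℝ} (hφ : ContinuousOn (fun p : ℝ × X => φ p.1 p.2) (Icc 0 L ×ˢ univ))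
    (hε : 0 < ε) :
    ∃ ε' > 0, ∀ s ∈ Icc 0 L, ∀ a b : X, dist a b < ε' → dist (φ s a) (φ s b) < ε := by
  obtain ⟨ε', hε', h⟩ := Metric.uniformContinuousOn_iff.1
    ((isCompact_Icc.prod isCompact_univ).uniformContinuousOn_of_continuous hφ) ε hε
  refine ⟨ε', hε', fun s hs a b hab => h (s, a) ⟨hs, trivial⟩ (s, b) ⟨hs, trivial⟩ ?_⟩
  simpa [Prod.dist_eq] using hab

section Separation

variable [MetricSpace X] {φ : ℝ → X → X} {τ : X → ℕ → ℝ} {T ε δ : ℝ}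

lemma IsSep.mono {E F : Set X} (hE : IsSep φ T ε E) (hFE : F ⊆ E) : IsSep φ T ε F :=
  fun x hx y hy => hE x (hFE hx) y (hFE hy)

lemma IsTSep.isSep {E : Set X} (hE : IsTSep φ τ T ε δ E) : IsSep φ T ε E :=
  fun x hx y hy hne hy' => hE x hx y hy hne fun t ht => hy' t (Jset_subset_Icc τ T δ x ht)

lemma IsSep.isTSep_of_dist_lt (hφ : IsSemiflow φ) {ε' : ℝ} (hδ : 0 ≤ δ)
    (hgap : ∀ x n, 2 * δ ≤ τ x (n + 1) - τ x n)
    (hφε : ∀ s ∈ Icc 0 (2 * δ), ∀ a b, dist a b < ε' → dist (φ s a) (φ s b) < ε)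
    {E : Set X} (hsep : IsSep φ T ε E) (hE : ∀ x ∈ E, ∀ y ∈ E, dist x y < ε') :
    IsTSep φ τ T ε' δ E := by
  intro x hx y hy hne hball
  obtain ⟨t, ht0, htT, hεt⟩ : ∃ t, 0 ≤ t ∧ t ≤ T ∧ ε ≤ dist (φ t x) (φ t y) := by
    simpa [dynBall] using hsep x hx y hy hne
  have h2δt : 2 * δ < t := by
    by_contra! htδ
    exact (hφε t ⟨ht0, htδ⟩ x y (hE x hx y hy)).not_ge hεt
  obtain ⟨t', ht'J, ht't, htt'⟩ := exists_mem_Jset_le_le_add hδ (hgap x) ⟨h2δt, htT⟩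
  have ht'0 : 0 ≤ t' := (Jset_subset_Icc τ T δ x ht'J).1
  have hclose := hφε (t - t') ⟨by linarith, by linarith⟩ _ _ (hball t' ht'J)
  rw [← hφ.apply_eq_apply_sub ht'0 ht't, ← hφ.apply_eq_apply_sub ht'0 ht't] at hclose
  exact hclose.not_ge hεt

lemma tSepNum_le_sepNum (Y : Set X) : tSepNum φ τ Y T ε δ ≤ sepNum φ Y T ε :=
  iSup₂_mono' fun E hE => ⟨E, ⟨hE.1, hE.2.isSep⟩, le_rfl⟩

lemma sepNum_le_card_mul_tSepNum {Y : Set X} {ε' r : ℝ} (C : Finset X)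
    (hC : ∀ x ∈ Y, ∃ c ∈ C, dist x c < r)
    (hsmall : ∀ E : Finset X, IsSep φ T ε ↑E → (∀ x ∈ E, ∀ y ∈ E, dist x y < 2 * r) →
      IsTSep φ τ T ε' δ ↑E) :
    sepNum φ Y T ε ≤ C.card * tSepNum φ τ Y T ε' δ := by
  classical
  choose! center hcenter hdist using hC
  refine iSup₂_le fun E hE => ?_
  have hfiber : ∀ c, ((E.filter (center · = c)).card : ℝ≥0∞) ≤ tSepNum φ τ Y T ε' δ := by
    intro c
    have hsub : (↑(E.filter (center · = c)) : Set X) ⊆ E :=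
      Finset.coe_subset.2 (Finset.filter_subset _ E)
    refine le_iSup₂_of_le (E.filter (center · = c)) ⟨hsub.trans hE.1, hsmall _ (hE.2.mono hsub) ?_⟩
      le_rfl
    intro x hx y hy
    simp only [Finset.mem_filter] at hx hy
    calc dist x y ≤ dist x c + dist y c := dist_triangle_right x y c
      _ < 2 * r := by linarith [hx.2 ▸ hdist x (hE.1 hx.1), hy.2 ▸ hdist y (hE.1 hy.1)]
  calc (E.card : ℝ≥0∞) = ∑ c ∈ C, ((E.filter (center · = c)).card : ℝ≥0∞) := by
        rw [Finset.card_eq_sum_card_fiberwise fun x hx => hcenter x (hE.1 hx)]; push_cast; rfl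
    _ ≤ ∑ _c ∈ C, tSepNum φ τ Y T ε' δ := Finset.sum_le_sum fun c _ => hfiber c
    _ = C.card * tSepNum φ τ Y T ε' δ := by rw [Finset.sum_const, nsmul_eq_mul]

end Separation

lemma tHtop_le_htop [MetricSpace X] (φ : ℝ → X → X) (τ : X → ℕ → ℝ) (Y : Set X) (η : ℝ) :
    tHtop φ τ Y η ≤ htop φ Y :=
  iSup₂_le fun _δ _ => iSup_le fun _ => iSup₂_mono fun _ε _ =>
    growthRate_mono fun _T => tSepNum_le_sepNum Y

lemma exists_finset_forall_dist_lt [MetricSpace X] [CompactSpace X] {r : ℝ} (hr : 0 < r) :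
    ∃ C : Finset X, ∀ x, ∃ c ∈ C, dist x c < r := by
  obtain ⟨C, -, hCfin, hcover⟩ := finite_cover_balls_of_compact (isCompact_univ (X := X)) hr
  refine ⟨hCfin.toFinset, fun x => ?_⟩
  simpa using hcover (mem_univ x)

lemma htop_univ_le_tHtop [MetricSpace X] [CompactSpace X] {φ : ℝ → X → X}
    (hφ : IsContSemiflow φ) {τ : X → ℕ → ℝ} {η : ℝ} (hη : 0 < η)
    (hgap : ∀ x n, η ≤ τ x (n + 1) - τ x n) :
    htop φ univ ≤ tHtop φ τ univ η := by
  refine iSup₂_le fun ε hε => ?_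
  obtain ⟨δ, hδ, hδη⟩ : ∃ δ, 0 < δ ∧ 2 * δ < η := ⟨η / 4, by positivity, by linarith⟩
  obtain ⟨ε', hε', hφε⟩ := (hφ.2.mono (prod_mono_left Icc_subset_Ici_self)
    ).exists_pos_forall_Icc_dist_apply_lt (L := 2 * δ) hε
  obtain ⟨C, hC⟩ := exists_finset_forall_dist_lt (X := X) (half_pos hε')
  have hcount : ∀ T, sepNum φ univ T ε ≤ C.card * tSepNum φ τ univ T ε' δ := fun T =>
    sepNum_le_card_mul_tSepNum C (fun x _ => hC x) fun E hsep hE => hsep.isTSep_of_dist_lt hφ.1 hδ.le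
      (fun x n => by linarith [hgap x n]) hφε (mul_div_cancel₀ ε' two_ne_zero ▸ hE)
  calc growthRate (fun T => sepNum φ univ T ε)
      ≤ growthRate (fun T => C.card * tSepNum φ τ univ T ε' δ) := growthRate_mono hcount
    _ ≤ growthRate (fun T => tSepNum φ τ univ T ε' δ) :=
        growthRate_const_mul_le (ENNReal.natCast_ne_top _) _
    _ ≤ tHtop φ τ univ η :=
        le_iSup₂_of_le δ hδ <| le_iSup_of_le (by linarith) <| le_iSup₂_of_le ε' hε' le_rfl

end

/-- Theorem A: for a continuous semiflow on a compact metric space, the `τ`-topological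
entropy coincides with the classical topological entropy. -/
theorem tHtop_eq_htop {X : Type*} [MetricSpace X] [CompactSpace X]
    (φ : ℝ → X → X) (hφ : IsContSemiflow φ) (τ : X → ℕ → ℝ) (Z : Set X) (η : ℝ)
    (hτ : IsAdmissible φ τ Z η) :
    tHtop φ τ Set.univ η = htop φ Set.univ :=
  (tHtop_le_htop φ τ univ η).antisymm (htop_univ_le_tHtop hφ hτ.1 hτ.2.2.2.2.2)
end

section
/- Let (X, φ, D, I) be an impulsive dynamical system with impulsive semiflow ψ, and suppose I(D) ∩ D = ∅. If μ is a Borel probability measure on X invariant under ψ (μ(ψ_t⁻¹ A) = μ(A) for all t ≥ 0 and Borel A), then μ(D) = 0. -/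
open Set Filter Metric ENNReal

/-- The half-open flow tube `{φ_t(x) : 0 < t < ξ}`. -/
def Tube {X : Type*} (φ : ℝ → X → X) (x : X) (ξ : ℝ) : Set X :=
  {y | ∃ t : ℝ, 0 < t ∧ t < ξ ∧ y = φ t x}

/-- The set `D_ξ = ⋃_{x ∈ D} {φ_t(x) : 0 < t < ξ}`. -/
def Dxi {X : Type*} (φ : ℝ → X → X) (D : Set X) (ξ : ℝ) : Set X :=
  ⋃ x ∈ D, Tube φ x ξ

/-- `D` satisfies the half-tube condition with parameter `ξ₀`. -/
def HalfTube {X : Type*} [MetricSpace X] (φ : ℝ → X → X) (D : Set X) (ξ₀ : ℝ) : Prop :=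
  0 < ξ₀ ∧
  (∀ ξ : ℝ, 0 < ξ → ξ ≤ ξ₀ → IsOpen (Dxi φ D ξ)) ∧
  (∀ x : X, ∀ t : ℝ, 0 < t → φ t x ∈ Dxi φ D ξ₀ →
    ∃ t' : ℝ, 0 ≤ t' ∧ t' < t ∧ φ t' x ∈ D) ∧
  (∀ x₁ ∈ D, ∀ x₂ ∈ D, x₁ ≠ x₂ → Disjoint (Tube φ x₁ ξ₀) (Tube φ x₂ ξ₀))

/-- `ψ` is the impulsive semiflow of the impulsive dynamical system `(X, φ, D, I)`:
it is a semiflow, it follows `φ` before the first hit of `D`, it jumps via `I` at the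
first hitting time of `D`, and first hitting times are positive. -/
def IsImpulsive {X : Type*} (φ ψ : ℝ → X → X) (D : Set X) (I : X → X) : Prop :=
  IsSemiflow ψ ∧
  (∀ x : X, ∀ t : ℝ, 0 ≤ t → (∀ s : ℝ, 0 < s → s ≤ t → φ s x ∉ D) → ψ t x = φ t x) ∧
  (∀ x : X, ∀ t : ℝ, 0 < t → φ t x ∈ D → (∀ s : ℝ, 0 < s → s < t → φ s x ∉ D) →
    ψ t x = I (φ t x)) ∧
  (∀ x : X, ∃ t : ℝ, 0 < t ∧ ∀ s : ℝ, 0 < s → s < t → φ s x ∉ D)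

/-- `t` is the first (positive) hitting time of `D` by the `φ`-orbit of `x`. -/
def FirstHitAt {X : Type*} (φ : ℝ → X → X) (D : Set X) (x : X) (t : ℝ) : Prop :=
  0 < t ∧ φ t x ∈ D ∧ ∀ s : ℝ, 0 < s → s < t → φ s x ∉ D

/-- First hitting time of `D` as an extended nonnegative real (`∞` if the orbit never hits `D`). -/
noncomputable def firstHit {X : Type*} (φ : ℝ → X → X) (D : Set X) (x : X) : ℝ≥0∞ :=
  sInf (ENNReal.ofReal '' {t : ℝ | 0 < t ∧ φ t x ∈ D})

open Classical in
/-- The function `τ*`, equal to the first hitting time of `D` off `D` and `0` on `D`. -/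
noncomputable def tauStar {X : Type*} (φ : ℝ → X → X) (D : Set X) (x : X) : ℝ≥0∞ :=
  if x ∈ D then 0 else firstHit φ D x

/-- The equivalence relation identifying points of `D` with their images under `I`:
`x ∼ y` iff `x = y`, `y = I x`, `x = I y`, or `I x = I y` (with the relevant points in `D`). -/
def ImpRel {X : Type*} (D : Set X) (I : X → X) (x y : X) : Prop :=
  x = y ∨ (x ∈ D ∧ y = I x) ∨ (y ∈ D ∧ x = I y) ∨ (x ∈ D ∧ y ∈ D ∧ I x = I y)

/-- The quotient pseudometric induced by `dist` and the relation `ImpRel D I`: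
infimum of chain sums `d(p₁,q₁) + ⋯ + d(pₙ,qₙ)` with `p₁ ∼ x`, `qᵢ ∼ pᵢ₊₁`, `qₙ ∼ y`. -/
noncomputable def chainDist {X : Type*} [MetricSpace X] (D : Set X) (I : X → X)
    (x y : X) : ℝ :=
  sInf {s : ℝ | ∃ n : ℕ, ∃ p q : Fin (n + 1) → X,
    ImpRel D I x (p 0) ∧ ImpRel D I (q (Fin.last n)) y ∧
    (∀ i : Fin n, ImpRel D I (q i.castSucc) (p i.succ)) ∧
    s = ∑ i, dist (p i) (q i)}

/-- The set `X_ξ = X ∖ (D_ξ ∪ D)`. -/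
def Xxi {X : Type*} (φ : ℝ → X → X) (D : Set X) (ξ : ℝ) : Set X :=
  Set.univ \ (Dxi φ D ξ ∪ D)

/-- The set `S` is transverse to the semiflow `φ`: no immediate return to `S`,
and the flow tubes issued from distinct points of `S` are pairwise disjoint. -/
def TransverseSet {X : Type*} [MetricSpace X] (φ : ℝ → X → X) (S : Set X) : Prop :=
  ∃ s₀ : ℝ, 0 < s₀ ∧ ∃ ξ₀ : ℝ, 0 < ξ₀ ∧
    (∀ x : X, ∀ t : ℝ, 0 ≤ t → φ t x ∈ S → ∀ s : ℝ, 0 < s → s < s₀ → φ (t + s) x ∉ S) ∧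
    (∀ x₁ ∈ S, ∀ x₂ ∈ S, x₁ ≠ x₂ → Disjoint (Tube φ x₁ ξ₀) (Tube φ x₂ ξ₀))
open MeasureTheory

open Topology

/-!
The compact set `I(D)` is disjoint from the closed set `D`, so the continuous semiflow `φ` needs a
uniform time `η > 0` to carry any point of `I(D)` into `D`. Hence `ψ_η` maps all of `X` off `D`: an
orbit that meets `D` before time `η` is thrown into `I(D)` at its first hit and cannot reach `D`
again in the remaining time. Thus `ψ_η⁻¹(D) = ∅`, and invariance gives `μ(D) = μ(∅) = 0`.
-/

lemma IsCompact.exists_pos_forall_flow_mem {X : Type*} [TopologicalSpace X] {φ : ℝ → X → X}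
    {K U : Set X} (hφ : ContinuousOn (fun p : ℝ × X => φ p.1 p.2) (Ici 0 ×ˢ univ))
    (hK : IsCompact K) (hU : IsOpen U) (hKU : ∀ y ∈ K, φ 0 y ∈ U) :
    ∃ η > 0, ∀ s ∈ Icc 0 η, ∀ y ∈ K, φ s y ∈ U := by
  have hnear : ∀ y ∈ K, {p : ℝ × X | φ p.1 p.2 ∈ U} ∈ 𝓝[≥] 0 ×ˢ 𝓝 y := fun y hy => by
    rw [← nhdsWithin_univ, ← nhdsWithin_prod_eq]
    exact hφ (0, y) ⟨self_mem_Ici, trivial⟩ |>.preimage_mem_nhdsWithin (hU.mem_nhds (hKU y hy))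
  have hunif : ∀ᶠ s in 𝓝[≥] (0 : ℝ), ∀ y ∈ K, φ s y ∈ U :=
    Eventually.curry (hK.mem_prod_nhdsSet_of_forall hnear) |>.mono fun _ h => h.self_of_nhdsSet
  exact mem_nhdsGE_iff_exists_Icc_subset.mp hunif

lemma exists_firstHitAt_le {X : Type*} [TopologicalSpace X] {φ : ℝ → X → X} {D : Set X}
    {x : X} (hx : ContinuousOn (fun s => φ s x) (Ici 0)) (hD : IsClosed D)
    (hpos : ∃ ε > 0, ∀ s, 0 < s → s < ε → φ s x ∉ D) {t : ℝ} (ht : 0 < t) (htD : φ t x ∈ D) :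
    ∃ t₁ ≤ t, FirstHitAt φ D x t₁ := by
  obtain ⟨ε, hε, hno⟩ := hpos
  have hεle : ∀ s, 0 < s → φ s x ∈ D → ε ≤ s := fun s hs hsD => not_lt.mp (hno s hs · hsD)
  set A := Icc ε t ∩ (fun s => φ s x) ⁻¹' D
  have hA : IsClosed A :=
    (hx.mono fun s hs => hε.le.trans hs.1).preimage_isClosed_of_isClosed isClosed_Icc hD
  have hAbdd : BddBelow A := ⟨ε, fun s hs => hs.1.1⟩
  have hmem : sInf A ∈ A := hA.csInf_mem ⟨t, ⟨hεle t ht htD, le_rfl⟩, htD⟩ hAbdd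
  refine ⟨sInf A, hmem.1.2, hε.trans_le hmem.1.1, hmem.2, fun s hs hlt hsD => ?_⟩
  exact hlt.not_ge (csInf_le hAbdd ⟨⟨hεle s hs hsD, hlt.le.trans hmem.1.2⟩, hsD⟩)

lemma IsImpulsive.apply_notMem {X : Type*} [TopologicalSpace X] {φ ψ : ℝ → X → X} {D : Set X}
    {I : X → X} (himp : IsImpulsive φ ψ D I) (hφ : ∀ x, ContinuousOn (fun s => φ s x) (Ici 0))
    (hD : IsClosed D) {η : ℝ} (hη : 0 < η) (hflow : ∀ s ∈ Icc 0 η, ∀ y ∈ I '' D, φ s y ∉ D)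
    (x : X) : ψ η x ∉ D := by
  obtain ⟨⟨-, hψadd⟩, hψflow, hψjump, hψpos⟩ := himp
  by_cases hhit : ∃ s ∈ Ioc 0 η, φ s x ∈ D
  · obtain ⟨s, ⟨hs, hsη⟩, hsD⟩ := hhit
    obtain ⟨t, hts, ht, htD, hfirst⟩ := exists_firstHitAt_le (hφ x) hD (hψpos x) hs hsD
    have hjump : ψ t x ∈ I '' D := hψjump x t ht htD hfirst ▸ mem_image_of_mem I htD
    have hrest : 0 ≤ η - t := by linarith
    have hrest_flow : ∀ r ∈ Icc 0 (η - t), φ r (ψ t x) ∉ D := fun r hr =>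
      hflow r ⟨hr.1, by linarith [hr.2]⟩ _ hjump
    rw [← sub_add_cancel η t, hψadd t (η - t) ht.le hrest,
      hψflow _ _ hrest fun r hr hrη => hrest_flow r ⟨hr.le, hrη⟩]
    exact hrest_flow _ ⟨hrest, le_rfl⟩
  · push Not at hhit
    rw [hψflow x η hη.le fun s hs hsη => hhit s ⟨hs, hsη⟩]
    exact hhit η ⟨hη, le_rfl⟩

theorem measure_D_eq_zero_general {X : Type*} [MetricSpace X]
    [MeasurableSpace X] [BorelSpace X]
    (φ ψ : ℝ → X → X) (D : Set X) (I : X → X)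
    (hφ : IsContSemiflow φ) (hD : IsCompact D) (hI : ContinuousOn I D)
    (himp : IsImpulsive φ ψ D I) (hID : I '' D ∩ D = ∅)
    (μ : Measure X)
    (hinv : ∀ t : ℝ, 0 ≤ t → ∀ A : Set X, MeasurableSet A → μ (ψ t ⁻¹' A) = μ A) :
    μ D = 0 := by
  obtain ⟨⟨hφ0, -⟩, hφc⟩ := hφ
  have horbit : ∀ x, ContinuousOn (fun s => φ s x) (Ici 0) := fun x =>
    hφc.comp (continuous_id.prodMk continuous_const).continuousOn fun _ hs => ⟨hs, trivial⟩
  have hstart : ∀ y ∈ I '' D, φ 0 y ∈ Dᶜ := fun y hy => by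
    rw [hφ0]
    exact (disjoint_iff_inter_eq_empty.mpr hID).subset_compl_right hy
  obtain ⟨η, hη, hflow⟩ :=
    (hD.image_of_continuousOn hI).exists_pos_forall_flow_mem hφc hD.isClosed.isOpen_compl hstart
  have hempty : ψ η ⁻¹' D = ∅ :=
    eq_empty_of_forall_notMem (himp.apply_notMem horbit hD.isClosed hη hflow)
  rw [← hinv η hη.le D hD.isClosed.measurableSet, hempty, measure_empty]

/-- Any `ψ`-invariant Borel probability measure gives zero mass to `D`. -/
theorem measure_D_eq_zero {X : Type*} [MetricSpace X] [CompactSpace X]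
    [MeasurableSpace X] [BorelSpace X]
    (φ ψ : ℝ → X → X) (D : Set X) (I : X → X)
    (hφ : IsContSemiflow φ) (hD : IsCompact D) (hI : ContinuousOn I D)
    (himp : IsImpulsive φ ψ D I) (hID : I '' D ∩ D = ∅)
    (μ : Measure X) (hprob : IsProbabilityMeasure μ)
    (hinv : ∀ t : ℝ, 0 ≤ t → ∀ A : Set X, MeasurableSet A → μ (ψ t ⁻¹' A) = μ A) :
    μ D = 0 :=
  measure_D_eq_zero_general φ ψ D I hφ hD hI himp hID μ hinv
end

section
/- Let ψ be a semiflow on a compact metric space X and ψ̃ a semiflow on a compact metric space X̃, and let i: X_ξ → X be the inclusion of a forward-invariant Borel subset X_ξ whose complement is ψ-invariantly null (every ψ-invariant Borel probability measure on X gives zero measure to X ∖ X_ξ), and f: X_ξ → X̃ a bimeasurable bijection with f ∘ ψ_t = ψ̃_t ∘ f for all t ≥ 0. Then the map ν ↦ (i ∘ f⁻¹)_* ν is a bijection from the set of ψ̃-invariant Borel probability measures on X̃ onto the set of ψ-invariant Borel probability measures on X. -/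
open Set Filter Metric ENNReal

/-- `P` is a finite measurable partition of `X` modulo `μ`-null sets. -/
def IsMeasPartition {X : Type*} [MeasurableSpace X] (μ : MeasureTheory.Measure X)
    (P : Finset (Set X)) : Prop :=
  (∀ A ∈ P, MeasurableSet A) ∧ μ (Set.univ \ ⋃₀ ↑P) = 0 ∧
  ∀ A ∈ P, ∀ B ∈ P, A ≠ B → μ (A ∩ B) = 0

/-- Entropy of a finite partition: `∑_{A ∈ P} -μ(A) log μ(A)`. -/
noncomputable def partEntropy {X : Type*} [MeasurableSpace X] (μ : MeasureTheory.Measure X)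
    (P : Finset (Set X)) : ℝ :=
  ∑ A ∈ P, Real.negMulLog (μ A).toReal

open Classical in
/-- The joint refinement `P ∨ T⁻¹P ∨ ⋯ ∨ T^{-(n-1)}P`. -/
noncomputable def jointPart {X : Type*} (T : X → X) (P : Finset (Set X)) (n : ℕ) :
    Finset (Set X) :=
  (Finset.univ : Finset (Fin n → {A // A ∈ P})).image
    (fun f => ⋂ i : Fin n, (T^[(i : ℕ)]) ⁻¹' (f i).1)

/-- Entropy of `T` with respect to the partition `P`:
`lim_{n→∞} (1/n) H_μ(P ∨ ⋯ ∨ T^{-(n-1)}P)`. -/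
noncomputable def partKS {X : Type*} [MeasurableSpace X] (μ : MeasureTheory.Measure X)
    (T : X → X) (P : Finset (Set X)) : ℝ :=
  Filter.limsup (fun n : ℕ => partEntropy μ (jointPart T P n) / n) Filter.atTop

/-- The Kolmogorov–Sinai (measure-theoretic) entropy of `T` with respect to `μ`. -/
noncomputable def kolSinaiEntropy {X : Type*} [MeasurableSpace X] (μ : MeasureTheory.Measure X)
    (T : X → X) : ℝ :=
  ⨆ (P : Finset (Set X)) (_ : IsMeasPartition μ P), partKS μ T P

/-- `μ` is a `ψ`-invariant Borel probability measure. -/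
def IsInvariantProb {X : Type*} [MeasurableSpace X] (ψ : ℝ → X → X)
    (μ : MeasureTheory.Measure X) : Prop :=
  MeasureTheory.IsProbabilityMeasure μ ∧
  ∀ t : ℝ, 0 ≤ t → ∀ A : Set X, MeasurableSet A → μ (ψ t ⁻¹' A) = μ A
open MeasureTheory

/-!
Write `h := i ∘ f⁻¹ : Y → X`. Bimeasurability of `f` makes `h` a measurable embedding onto `Xξ`,
and the conjugacy says `h ∘ ψ̃ₜ = ψₜ ∘ h`. Pushing forward along `h` preserves invariance, and
pulling back along `h` is inverse to it on measures carried by `Xξ` — by hypothesis, all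
`ψ`-invariant probability measures.
-/

lemma Set.image_preimage_eq_preimage_image_inter_range_of_semiconj {X Y : Type*}
    {ψ : ℝ → X → X} {φ : ℝ → Y → Y} {h : Y → X} (hinj : Function.Injective h)
    (hsemi : ∀ t, 0 ≤ t → ∀ y, h (φ t y) = ψ t (h y)) {t : ℝ} (ht : 0 ≤ t) (A : Set Y) :
    h '' (φ t ⁻¹' A) = ψ t ⁻¹' (h '' A) ∩ range h := by
  ext x
  constructor
  · rintro ⟨y, hy, rfl⟩
    exact ⟨⟨φ t y, hy, hsemi t ht y⟩, mem_range_self y⟩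
  · rintro ⟨⟨z, hz, hzx⟩, y, rfl⟩
    rw [← hsemi t ht y] at hzx
    exact ⟨y, by rwa [mem_preimage, ← hinj hzx], rfl⟩

namespace IsInvariantProb

variable {X Y : Type*} [MeasurableSpace X] [MeasurableSpace Y]
  {ψ : ℝ → X → X} {φ : ℝ → Y → Y} {h : Y → X}

lemma map (hh : MeasurableEmbedding h) (hsemi : ∀ t, 0 ≤ t → ∀ y, h (φ t y) = ψ t (h y))
    {ν : Measure Y} (hν : IsInvariantProb φ ν) : IsInvariantProb ψ (ν.map h) := by
  have := hν.1
  refine ⟨Measure.isProbabilityMeasure_map hh.measurable.aemeasurable, fun t ht A hA => ?_⟩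
  have hpre : h ⁻¹' (ψ t ⁻¹' A) = φ t ⁻¹' (h ⁻¹' A) := by
    ext y
    simp only [mem_preimage, hsemi t ht y]
  rw [hh.map_apply, hh.map_apply, hpre, hν.2 t ht _ (hh.measurable hA)]

lemma comap (hh : MeasurableEmbedding h) (hsemi : ∀ t, 0 ≤ t → ∀ y, h (φ t y) = ψ t (h y))
    {μ : Measure X} (hμ : IsInvariantProb ψ μ) (hrange : μ (range h)ᶜ = 0) :
    IsInvariantProb φ (μ.comap h) := by
  have := hμ.1
  refine ⟨⟨?_⟩, fun t ht A hA => ?_⟩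
  · rw [hh.comap_apply, image_univ, ← univ_inter (range h), measure_inter_conull hrange,
      measure_univ]
  · rw [hh.comap_apply, hh.comap_apply,
      image_preimage_eq_preimage_image_inter_range_of_semiconj hh.injective hsemi ht,
      measure_inter_conull hrange, hμ.2 t ht _ (hh.measurableSet_image.2 hA)]

noncomputable def equivOfMeasurableEmbedding (hh : MeasurableEmbedding h)
    (hsemi : ∀ t, 0 ≤ t → ∀ y, h (φ t y) = ψ t (h y))
    (hrange : ∀ μ : Measure X, IsInvariantProb ψ μ → μ (range h)ᶜ = 0) :
    {ν : Measure Y // IsInvariantProb φ ν} ≃ {μ : Measure X // IsInvariantProb ψ μ} where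
  toFun ν := ⟨ν.1.map h, ν.2.map hh hsemi⟩
  invFun μ := ⟨μ.1.comap h, μ.2.comap hh hsemi (hrange μ.1 μ.2)⟩
  left_inv ν := Subtype.ext (hh.comap_map ν.1)
  right_inv μ := Subtype.ext <| by
    simp only [hh.map_comap]
    exact Measure.restrict_eq_self_of_ae_mem (mem_ae_iff.2 (hrange μ.1 μ.2))

end IsInvariantProb

theorem pushforward_bijection_of_invariant_measures_general
    {X Y : Type*} [MeasurableSpace X] [MeasurableSpace Y]
    (ψ : ℝ → X → X) (ψt : ℝ → Y → Y)
    (Xξ : Set X) (hXm : MeasurableSet Xξ)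
    (hfwd : ∀ t : ℝ, 0 ≤ t → Set.MapsTo (ψ t) Xξ Xξ)
    (hnull : ∀ μ : Measure X, IsInvariantProb ψ μ → μ (Set.univ \ Xξ) = 0)
    (f : Xξ → Y) (hfm : Measurable f)
    (g : Y → Xξ) (hgf : Function.LeftInverse g f) (hfg : Function.RightInverse g f)
    (hgm : Measurable g)
    (hconj : ∀ t : ℝ, ∀ ht : 0 ≤ t, ∀ x : Xξ,
      f ⟨ψ t x.1, hfwd t ht x.2⟩ = ψt t (f x)) :
    ∃ F : {ν : Measure Y // IsInvariantProb ψt ν} → {μ : Measure X // IsInvariantProb ψ μ},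
      (∀ ν, (F ν).1 = Measure.map (fun y : Y => ((g y : Xξ) : X)) ν.1) ∧
      Function.Bijective F := by
  let e : Y ≃ᵐ Xξ := ⟨⟨g, f, hfg, hgf⟩, hgm, hfm⟩
  have hemb : MeasurableEmbedding (fun y : Y => ((g y : Xξ) : X)) :=
    (MeasurableEmbedding.subtype_coe hXm).comp e.measurableEmbedding
  have hrange : range (fun y : Y => ((g y : Xξ) : X)) = Xξ := by
    rw [range_comp' Subtype.val g, hgf.surjective.range_eq, image_univ, Subtype.range_coe]
  have hsemi : ∀ t, 0 ≤ t → ∀ y, (g (ψt t y) : X) = ψ t (g y) := fun t ht y => by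
    rw [← hfg y, ← hconj t ht (g y), hgf, hfg]
  have hrange_null : ∀ μ : Measure X, IsInvariantProb ψ μ → μ (range fun y => (g y : X))ᶜ = 0 :=
    fun μ hμ => by rw [hrange, compl_eq_univ_sdiff]; exact hnull μ hμ
  exact ⟨IsInvariantProb.equivOfMeasurableEmbedding hemb hsemi hrange_null, fun _ => rfl,
    Equiv.bijective _⟩

/-- Pushing forward by `i ∘ f⁻¹` is a bijection between invariant probability measures of the
quotient semiflow and invariant probability measures of the impulsive semiflow. -/
theorem pushforward_bijection_of_invariant_measures
    {X Y : Type*} [MetricSpace X] [CompactSpace X] [MeasurableSpace X] [BorelSpace X]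
    [MetricSpace Y] [CompactSpace Y] [MeasurableSpace Y] [BorelSpace Y]
    (ψ : ℝ → X → X) (ψt : ℝ → Y → Y) (hψ : IsSemiflow ψ) (hψt : IsSemiflow ψt)
    (hmeas : ∀ t : ℝ, 0 ≤ t → Measurable (ψ t)) (hmeast : ∀ t : ℝ, 0 ≤ t → Measurable (ψt t))
    (Xξ : Set X) (hXm : MeasurableSet Xξ)
    (hfwd : ∀ t : ℝ, 0 ≤ t → Set.MapsTo (ψ t) Xξ Xξ)
    (hnull : ∀ μ : Measure X, IsInvariantProb ψ μ → μ (Set.univ \ Xξ) = 0)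
    (f : Xξ → Y) (hfb : Function.Bijective f) (hfm : Measurable f)
    (g : Y → Xξ) (hgf : Function.LeftInverse g f) (hfg : Function.RightInverse g f)
    (hgm : Measurable g)
    (hconj : ∀ t : ℝ, ∀ ht : 0 ≤ t, ∀ x : Xξ,
      f ⟨ψ t x.1, hfwd t ht x.2⟩ = ψt t (f x)) :
    ∃ F : {ν : Measure Y // IsInvariantProb ψt ν} → {μ : Measure X // IsInvariantProb ψ μ},
      (∀ ν, (F ν).1 = Measure.map (fun y : Y => ((g y : Xξ) : X)) ν.1) ∧
      Function.Bijective F :=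
  pushforward_bijection_of_invariant_measures_general ψ ψt Xξ hXm hfwd hnull f hfm g hgf hfg hgm
    hconj
end

section
/- Let X be a compact metric space with metric d, D ⊂ X compact, and I: D → X continuous with I(D) ∩ D = ∅. Let ∼ be the equivalence relation: x ∼ y iff x = y, y = I(x), x = I(y), or I(x) = I(y), and π: X → X/∼ the projection. Then the restriction of π to X_ξ = X ∖ (D_ξ ∪ D) is injective, and π(X_ξ) = π(X_ξ ∪ D). -/
open Set Filter Metric ENNReal

namespace ImpRel

variable {X : Type*} {D S : Set X} {I : X → X} {x y : X}

theorem rel_apply (hx : x ∈ D) : ImpRel D I x (I x) :=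
  Or.inr (Or.inl ⟨hx, rfl⟩)

theorem apply_rel (hx : x ∈ D) : ImpRel D I (I x) x :=
  Or.inr (Or.inr (Or.inl ⟨hx, rfl⟩))

theorem eq_of_notMem (h : ImpRel D I x y) (hx : x ∉ D) (hy : y ∉ D) : x = y := by
  rcases h with h | ⟨hxD, -⟩ | ⟨hyD, -⟩ | ⟨hxD, -⟩
  exacts [h, (hx hxD).elim, (hy hyD).elim, (hx hxD).elim]

theorem equivalence (hI : MapsTo I D Dᶜ) : Equivalence (ImpRel D I) where
  refl _ := Or.inl rfl
  symm := by
    rintro a b (rfl | ⟨ha, rfl⟩ | ⟨hb, rfl⟩ | ⟨ha, hb, h⟩)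
    exacts [Or.inl rfl, apply_rel ha, rel_apply hb,
      Or.inr (Or.inr (Or.inr ⟨hb, ha, h.symm⟩))]
  trans := by
    rintro a b c (rfl | ⟨ha, rfl⟩ | ⟨hb, rfl⟩ | ⟨ha, hb, hab⟩) hbc
    · exact hbc
    · rcases hbc with rfl | ⟨hb', -⟩ | ⟨hc, hbc⟩ | ⟨hb', -⟩
      exacts [rel_apply ha, (hI ha hb').elim, Or.inr (Or.inr (Or.inr ⟨ha, hc, hbc⟩)),
        (hI ha hb').elim]
    · rcases hbc with rfl | ⟨-, rfl⟩ | ⟨hc, rfl⟩ | ⟨-, hc, hbc⟩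
      exacts [apply_rel hb, Or.inl rfl, (hI hc hb).elim,
        Or.inr (Or.inr (Or.inl ⟨hc, hbc⟩))]
    · rcases hbc with rfl | ⟨-, rfl⟩ | ⟨hc, rfl⟩ | ⟨-, hc, hbc⟩
      exacts [Or.inr (Or.inr (Or.inr ⟨ha, hb, hab⟩)), Or.inr (Or.inl ⟨ha, hab.symm⟩),
        (hI hc hb).elim, Or.inr (Or.inr (Or.inr ⟨ha, hc, hab.trans hbc⟩))]

theorem quot_mk_injOn (hI : MapsTo I D Dᶜ) (hS : Disjoint S D) :
    InjOn (Quot.mk (ImpRel D I)) S := fun _ hx _ hy hxy =>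
  ((equivalence hI).eqvGen_iff.mp (Quot.eq.mp hxy)).eq_of_notMem
    (hS.notMem_of_mem_left hx) (hS.notMem_of_mem_left hy)

theorem image_quot_mk_union_eq (hI : MapsTo I D S) :
    Quot.mk (ImpRel D I) '' (S ∪ D) = Quot.mk (ImpRel D I) '' S := by
  refine (image_mono subset_union_left).antisymm' ?_
  rintro _ ⟨x, hx | hx, rfl⟩
  exacts [⟨x, hx, rfl⟩, ⟨I x, hI hx, Quot.sound (apply_rel hx)⟩]

end ImpRel

theorem disjoint_Xxi {X : Type*} (φ : ℝ → X → X) (D : Set X) (ξ : ℝ) :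
    Disjoint (Xxi φ D ξ) D :=
  disjoint_left.mpr fun _ hx hxD => hx.2 (Or.inr hxD)

theorem quot_injOn_Xxi_general {X : Type*}
    (φ : ℝ → X → X) (D : Set X) (I : X → X)
    (ξ : ℝ)
    (hIXξ : ∀ x ∈ D, I x ∈ Xxi φ D ξ) :
    Set.InjOn (Quot.mk (ImpRel D I)) (Xxi φ D ξ) ∧
    Quot.mk (ImpRel D I) '' Xxi φ D ξ = Quot.mk (ImpRel D I) '' (Xxi φ D ξ ∪ D) := by
  have hXD := disjoint_Xxi φ D ξ
  have hIDc : MapsTo I D Dᶜ := fun x hx => hXD.subset_compl_right (hIXξ x hx)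
  exact ⟨ImpRel.quot_mk_injOn hIDc hXD, (ImpRel.image_quot_mk_union_eq hIXξ).symm⟩

/-- The projection `π` is injective on `X_ξ`, and `π(X_ξ) = π(X_ξ ∪ D)`. -/
theorem quot_injOn_Xxi {X : Type*} [MetricSpace X] [CompactSpace X]
    (φ : ℝ → X → X) (D : Set X) (I : X → X)
    (hφ : IsContSemiflow φ) (hD : IsCompact D) (hI : ContinuousOn I D)
    (hID : I '' D ∩ D = ∅) (ξ : ℝ) (hξ : 0 < ξ)
    (hIXξ : ∀ x ∈ D, I x ∈ Xxi φ D ξ) :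
    Set.InjOn (Quot.mk (ImpRel D I)) (Xxi φ D ξ) ∧
    Quot.mk (ImpRel D I) '' Xxi φ D ξ = Quot.mk (ImpRel D I) '' (Xxi φ D ξ ∪ D) :=
  quot_injOn_Xxi_general φ D I ξ hIXξ
end
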